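/- Let η = (η_1,…,η_p) with p ≥ 2, set η̃ = (η_1,…,η_{p-1}) and r = η_1+⋯+η_{p-1}. If γ ∈ ℤ^n (n = |η|) with Σγ_i = 0 lies in the dominant chamber (γ_1 ≥ ⋯ ≥ γ_{n-1} ≥ 0) — in particular γ_{r+1} = ⋯ = γ_{n-1} = 0 and γ_n ≤ 0 — then K_{Φ(η)}(γ | q) = q^{−γ_n} Σ_β K_{Φ(η̃)}((γ_1 − β_1, …, γ_r − β_r) | q), where the sum runs over β ∈ ℤ_{≥0}^r with |β| = −γ_n. (Only the last coordinate contributes since γ_{r+1}=⋯=γ_{n-1}=0.) -/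

import Mathlib

open scoped Classical

noncomputable section

/-- Partial sum `S η r = η_1 + ⋯ + η_r`. -/
def S (η : List ℕ) (r : ℕ) : ℕ := (η.take r).sum

/-- The set `Φ(η)` of pairs (0-indexed) `(i,j)` with `i < S η r ≤ j` for some `1 ≤ r ≤ l(η)`. -/
def Phi (η : List ℕ) : Finset (ℕ × ℕ) :=
  (Finset.range η.sum ×ˢ Finset.range η.sum).filter
    (fun p => ∃ r ∈ Finset.Icc 1 η.length, p.1 < S η r ∧ S η r ≤ p.2)

/-- Coefficient of `q^d` in the parabolic `q`-Kostant partition function `K_{Φ(η)}(γ|q)`: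
the number of non-negative integer arrays supported on `Φ(η)` with net row sums `γ`
and total sum of entries `d`. -/
def KCoeff (η : List ℕ) (γ : ℕ → ℤ) (d : ℕ) : ℕ :=
  Nat.card {m : ℕ × ℕ → ℕ //
    (∀ p, p ∉ Phi η → m p = 0) ∧
    (∀ i ∈ Finset.range η.sum,
      (∑ j ∈ Finset.range η.sum, (m (i, j) : ℤ)) -
        (∑ j ∈ Finset.range η.sum, (m (j, i) : ℤ)) = γ i) ∧
    (∑ p ∈ Phi η, m p) = d}

/-- The parabolic Kostant partition function `K_{Φ(η)}(γ)` (value at `q = 1`). -/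
def KNum (η : List ℕ) (γ : ℕ → ℤ) : ℕ :=
  Nat.card {m : ℕ × ℕ → ℕ //
    (∀ p, p ∉ Phi η → m p = 0) ∧
    (∀ i ∈ Finset.range η.sum,
      (∑ j ∈ Finset.range η.sum, (m (i, j) : ℤ)) -
        (∑ j ∈ Finset.range η.sum, (m (j, i) : ℤ)) = γ i)}

/-- Coefficient of `q^d` in the parabolic Kostka polynomial
`K_{λμη}(q) = Σ_w (−1)^{ℓ(w)} K_{Φ(η)}(w(λ+δ) − μ − δ | q)`, where `δ = (n−1,…,1,0)`. -/
def ParKostkaCoeff (η : List ℕ) (lam mu : ℕ → ℤ) (d : ℕ) : ℤ :=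
  ∑ w : Equiv.Perm (Fin η.sum),
    (Equiv.Perm.sign w : ℤ) *
      (KCoeff η
        (fun i =>
          (if h : i < η.sum then
              lam ((w⁻¹ ⟨i, h⟩ : Fin η.sum) : ℕ) +
                ((η.sum : ℤ) - 1 - ((w⁻¹ ⟨i, h⟩ : Fin η.sum) : ℕ))
            else 0) - mu i - ((η.sum : ℤ) - 1 - i)) d : ℤ)

/-- The parabolic Kostka number `K_{λμη}(1)`. -/
def ParKostkaNum (η : List ℕ) (lam mu : ℕ → ℤ) : ℤ :=
  ∑ w : Equiv.Perm (Fin η.sum),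
    (Equiv.Perm.sign w : ℤ) *
      (KNum η
        (fun i =>
          (if h : i < η.sum then
              lam ((w⁻¹ ⟨i, h⟩ : Fin η.sum) : ℕ) +
                ((η.sum : ℤ) - 1 - ((w⁻¹ ⟨i, h⟩ : Fin η.sum) : ℕ))
            else 0) - mu i - ((η.sum : ℤ) - 1 - i)) : ℤ)

end

/-!
Write `η = η̃ ++ [a]` with `a > 0`, `r = |η̃|` and `n = r + a`, indices starting at `0`.
Every entry of an array on `Φ(η)` lies in a row `< r`, so for `r ≤ j < n - 1` the net sum of
row `j` is minus the sum of column `j`; as `γ_j ≥ 0` that column is empty. Hence the array is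
an array on `Φ(η̃)` plus its last column `β`, which sums to `-γ_{n-1}`: the net row sums of the
`Φ(η̃)` part are `γ_i - β_i` and its total is smaller by `|β|`. Conversely such a pair glues
back to an array on `Φ(η)`; the net row sums on `Φ(η̃)` add up to zero, which forces `γ` to
vanish on `[r, n - 1)`.
-/

open Finset

lemma S_le_sum (l : List ℕ) (s : ℕ) : S l s ≤ l.sum := by
  rw [S, ← List.sum_take_add_sum_drop l s]
  omega

lemma S_append_singleton {l : List ℕ} {s : ℕ} (a : ℕ) (hs : s ≤ l.length) :
    S (l ++ [a]) s = S l s := by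
  rw [S, S, List.take_append_of_le_length hs]

lemma mem_Phi {η : List ℕ} {p : ℕ × ℕ} :
    p ∈ Phi η ↔ (p.1 < η.sum ∧ p.2 < η.sum) ∧
      ∃ s, (1 ≤ s ∧ s ≤ η.length) ∧ p.1 < S η s ∧ S η s ≤ p.2 := by
  simp only [Phi, Finset.mem_filter, mem_product, mem_range, mem_Icc]

lemma Phi_subset_range (η : List ℕ) : Phi η ⊆ range η.sum ×ˢ range η.sum := fun _ hp =>
  mem_product.2 ⟨mem_range.2 (mem_Phi.1 hp).1.1, mem_range.2 (mem_Phi.1 hp).1.2⟩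

lemma eq_zero_of_notMem_range_of_notMem_Phi {η : List ℕ} {m : ℕ × ℕ → ℕ}
    (hm : ∀ p, p ∉ Phi η → m p = 0) : ∀ p, p ∉ range η.sum ×ˢ range η.sum → m p = 0 :=
  fun p hp => hm p fun h => hp (Phi_subset_range η h)

lemma mem_Phi_append_singleton {l : List ℕ} {a i j : ℕ} :
    (i, j) ∈ Phi (l ++ [a]) ↔
      (i, j) ∈ Phi l ∨ (i < l.sum ∧ l.sum ≤ j ∧ j < l.sum + a) := by
  simp only [mem_Phi, List.sum_append, List.sum_cons, List.sum_nil, add_zero,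
    List.length_append, List.length_singleton]
  constructor
  · rintro ⟨⟨-, hj⟩, s, ⟨hs1, hs⟩, hi, hsj⟩
    rcases Nat.lt_or_ge l.length s with hsl | hsl
    · have hlen : (l ++ [a]).length ≤ s := by
        rw [List.length_append, List.length_singleton]; omega
      rw [S, List.take_of_length_le hlen, List.sum_append, List.sum_singleton] at hsj
      omega
    rw [S_append_singleton a hsl] at hi hsj
    have := S_le_sum l s
    by_cases hjl : j < l.sum
    · exact Or.inl ⟨⟨by omega, hjl⟩, s, ⟨hs1, hsl⟩, hi, hsj⟩
    · exact Or.inr ⟨by omega, by omega, hj⟩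
  · rintro (⟨⟨hi, hj⟩, s, ⟨hs1, hs⟩, his, hsj⟩ | ⟨hi, hrj, hj⟩)
    · rw [← S_append_singleton a hs] at his hsj
      exact ⟨⟨by omega, by omega⟩, s, ⟨hs1, by omega⟩, his, hsj⟩
    · have hl : l ≠ [] := by rintro rfl; simp at hi
      have hlen := List.length_pos_iff.2 hl
      have hS : S (l ++ [a]) l.length = l.sum := by
        rw [S_append_singleton a le_rfl, S, List.take_length]
      exact ⟨⟨by omega, hj⟩, l.length, ⟨hlen, by omega⟩, hS ▸ hi, hS ▸ hrj⟩

lemma Phi_subset_Phi_append_singleton (l : List ℕ) (a : ℕ) : Phi l ⊆ Phi (l ++ [a]) :=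
  fun ⟨_, _⟩ h => mem_Phi_append_singleton.2 (Or.inl h)

def netRowSum (N : ℕ) (m : ℕ × ℕ → ℕ) (i : ℕ) : ℤ :=
  ∑ j ∈ range N, (m (i, j) : ℤ) - ∑ j ∈ range N, (m (j, i) : ℤ)

def IsKostantArray (η : List ℕ) (γ : ℕ → ℤ) (d : ℕ) (m : ℕ × ℕ → ℕ) : Prop :=
  (∀ p, p ∉ Phi η → m p = 0) ∧ (∀ i ∈ range η.sum, netRowSum η.sum m i = γ i) ∧
    ∑ p ∈ Phi η, m p = d

lemma KCoeff_eq_card (η : List ℕ) (γ : ℕ → ℤ) (d : ℕ) :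
    KCoeff η γ d = Nat.card {m // IsKostantArray η γ d m} := rfl

instance (η : List ℕ) (γ : ℕ → ℤ) (d : ℕ) : Finite {m // IsKostantArray η γ d m} :=
  Set.Finite.to_subtype <| (piAntidiag (Phi η) d).finite_toSet.subset fun _ hm =>
    mem_piAntidiag.2 ⟨hm.2.2, fun p hp => by_contra (hp ∘ hm.1 p)⟩

lemma netRowSum_add (N : ℕ) (m m' : ℕ × ℕ → ℕ) (i : ℕ) :
    netRowSum N (m + m') i = netRowSum N m i + netRowSum N m' i := by
  simp only [netRowSum, Pi.add_apply, Nat.cast_add, sum_add_distrib]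
  ring

lemma sum_netRowSum (N : ℕ) (m : ℕ × ℕ → ℕ) : ∑ i ∈ range N, netRowSum N m i = 0 := by
  simp only [netRowSum, sum_sub_distrib]
  rw [sum_comm, sub_self]

lemma netRowSum_eq_of_le {R N : ℕ} {m : ℕ × ℕ → ℕ}
    (hm : ∀ p, p ∉ range R ×ˢ range R → m p = 0) (hRN : R ≤ N) (i : ℕ) :
    netRowSum N m i = netRowSum R m i := by
  have hsub := range_subset_range.2 hRN
  have h (f : ℕ → ℕ) (hf : ∀ j, R ≤ j → f j = 0) :
      ∑ j ∈ range N, (f j : ℤ) = ∑ j ∈ range R, (f j : ℤ) :=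
    (sum_subset hsub fun j _ hj => by simp [hf j (by simpa using hj)]).symm
  unfold netRowSum
  rw [h _ fun j hj => hm _ (by simp only [mem_product, mem_range]; omega),
    h _ fun j hj => hm _ (by simp only [mem_product, mem_range]; omega)]

lemma netRowSum_eq_zero_of_le {R : ℕ} {m : ℕ × ℕ → ℕ}
    (hm : ∀ p, p ∉ range R ×ˢ range R → m p = 0) {i : ℕ} (hi : R ≤ i) :
    netRowSum R m i = 0 := by
  unfold netRowSum
  rw [sum_eq_zero fun j _ => by rw [hm _ (by simp only [mem_product, mem_range]; omega)]; rfl,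
    sum_eq_zero fun j _ => by rw [hm _ (by simp only [mem_product, mem_range]; omega)]; rfl,
    sub_self]

lemma eq_zero_of_netRowSum_nonneg {N : ℕ} {m : ℕ × ℕ → ℕ} {j : ℕ}
    (hrow : ∀ k, m (j, k) = 0) (hj : 0 ≤ netRowSum N m j) {i : ℕ} (hi : i < N) :
    m (i, j) = 0 := by
  simp only [netRowSum, hrow, Nat.cast_zero, sum_const_zero, zero_sub, neg_nonneg] at hj
  have hcol : ∑ k ∈ range N, (m (k, j) : ℤ) = 0 :=
    le_antisymm hj (sum_nonneg fun _ _ => Nat.cast_nonneg _)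
  exact_mod_cast (sum_eq_zero_iff_of_nonneg fun _ _ => Nat.cast_nonneg _).1 hcol i
    (mem_range.2 hi)

def column (c : ℕ) (b : ℕ → ℕ) : ℕ × ℕ → ℕ := fun p => if p.2 = c then b p.1 else 0

def restrictCols (r : ℕ) (m : ℕ × ℕ → ℕ) : ℕ × ℕ → ℕ := fun p => if p.2 < r then m p else 0

lemma netRowSum_column {N c : ℕ} (hc : c < N) (b : ℕ → ℕ) (i : ℕ) :
    netRowSum N (column c b) i = b i - if i = c then ∑ j ∈ range N, (b j : ℤ) else 0 := by
  simp only [netRowSum, column]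
  split_ifs with h <;> simp [h, hc]

lemma eq_zero_of_sum_range_eq_neg {γ : ℕ → ℤ} {r c : ℕ} (hrc : r ≤ c)
    (hγ : ∀ i < c, 0 ≤ γ i) (h0 : ∑ i ∈ range (c + 1), γ i = 0)
    (hr : ∑ i ∈ range r, γ i = -γ c) {i : ℕ} (hri : r ≤ i) (hic : i < c) : γ i = 0 := by
  rw [sum_range_succ, ← sum_range_add_sum_Ico _ hrc, hr] at h0
  have hIco : ∑ j ∈ Ico r c, γ j = 0 := by linarith
  exact (sum_eq_zero_iff_of_nonneg fun j hj => hγ j (mem_Ico.1 hj).2).1 hIco i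
    (mem_Ico.2 ⟨hri, hic⟩)

section Glue

variable {l : List ℕ} {a : ℕ} {m₀ : ℕ × ℕ → ℕ} {b : ℕ → ℕ}

lemma add_column_eq_zero_of_notMem_Phi (ha : 0 < a) (hm₀ : ∀ p, p ∉ Phi l → m₀ p = 0)
    (hb : ∀ i, l.sum ≤ i → b i = 0) :
    ∀ p, p ∉ Phi (l ++ [a]) → (m₀ + column (l.sum + a - 1) b) p = 0 := by
  rintro ⟨i, j⟩ hp
  rw [mem_Phi_append_singleton, not_or] at hp
  simp only [Pi.add_apply, column, hm₀ _ hp.1, zero_add]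
  split_ifs with hj
  · exact hb i (by omega)
  · rfl

lemma netRowSum_add_column (ha : 0 < a) (hm₀ : ∀ p, p ∉ Phi l → m₀ p = 0)
    (hb : ∀ i, l.sum ≤ i → b i = 0) (i : ℕ) :
    netRowSum (l.sum + a) (m₀ + column (l.sum + a - 1) b) i =
      netRowSum l.sum m₀ i + b i -
        if i = l.sum + a - 1 then ∑ j ∈ range l.sum, (b j : ℤ) else 0 := by
  have hm₀' := eq_zero_of_notMem_range_of_notMem_Phi hm₀
  have hbsum : ∑ j ∈ range (l.sum + a), (b j : ℤ) = ∑ j ∈ range l.sum, (b j : ℤ) :=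
    (sum_subset (range_subset_range.2 (by omega)) fun j _ hj => by
      simp [hb j (by simpa using hj)]).symm
  rw [netRowSum_add, netRowSum_eq_of_le hm₀' (by omega), netRowSum_column (by omega), hbsum]
  ring

lemma sum_Phi_add_column (ha : 0 < a) (hm₀ : ∀ p, p ∉ Phi l → m₀ p = 0)
    (hb : ∀ i, l.sum ≤ i → b i = 0) :
    ∑ p ∈ Phi (l ++ [a]), (m₀ + column (l.sum + a - 1) b) p =
      ∑ p ∈ Phi l, m₀ p + ∑ i ∈ range l.sum, b i := by
  have hcol : range l.sum ×ˢ {l.sum + a - 1} ⊆ Phi (l ++ [a]) := by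
    rintro ⟨i, j⟩ h
    simp only [mem_product, mem_range, mem_singleton] at h
    exact mem_Phi_append_singleton.2 (Or.inr ⟨h.1, by omega, by omega⟩)
  simp only [Pi.add_apply]
  rw [sum_add_distrib, ← sum_subset (Phi_subset_Phi_append_singleton l a) fun p _ hp => hm₀ p hp,
    ← sum_subset hcol fun ⟨i, j⟩ _ hp => ?_, sum_product]
  · simp [column]
  · simp only [mem_product, mem_range, mem_singleton, not_and'] at hp
    simp only [column]
    split_ifs with hj
    · exact hb i (not_lt.1 (hp hj))
    · rfl

lemma isKostantArray_add_column_iff (ha : 0 < a) (hm₀ : ∀ p, p ∉ Phi l → m₀ p = 0)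
    (hb : ∀ i, l.sum ≤ i → b i = 0) {γ : ℕ → ℤ} {d k : ℕ}
    (hγ : ∀ i < l.sum + a - 1, 0 ≤ γ i) (h0 : ∑ i ∈ range (l.sum + a), γ i = 0)
    (hk : γ (l.sum + a - 1) = -k) :
    IsKostantArray (l ++ [a]) γ d (m₀ + column (l.sum + a - 1) b) ↔
      IsKostantArray l (fun i => γ i - b i) (d - k) m₀ ∧
        ∑ i ∈ range l.sum, b i = k ∧ k ≤ d := by
  have hrow := netRowSum_add_column ha hm₀ hb
  have htot := sum_Phi_add_column ha hm₀ hb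
  have hm₀' := eq_zero_of_notMem_range_of_notMem_Phi hm₀
  have hlast := hrow (l.sum + a - 1)
  rw [if_pos rfl, netRowSum_eq_zero_of_le hm₀' (by omega), hb _ (by omega), Nat.cast_zero,
    zero_add, zero_sub] at hlast
  simp only [IsKostantArray, List.sum_append, List.sum_cons, List.sum_nil, add_zero]
  constructor
  · rintro ⟨-, hrows, htot'⟩
    have hsum : ∑ i ∈ range l.sum, b i = k := by
      have := hrows (l.sum + a - 1) (mem_range.2 (by omega))
      rw [hlast, hk] at this
      exact_mod_cast (by linarith : ∑ i ∈ range l.sum, (b i : ℤ) = k)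
    refine ⟨⟨hm₀, fun i hi => ?_, by omega⟩, hsum, by omega⟩
    rw [mem_range] at hi
    have := hrows i (mem_range.2 (by omega))
    rw [hrow, if_neg (by omega)] at this
    linarith
  · rintro ⟨⟨-, hrows, htot'⟩, hsum, hkd⟩
    refine ⟨add_column_eq_zero_of_notMem_Phi ha hm₀ hb, fun i hi => ?_, by omega⟩
    rw [mem_range] at hi
    have hbsum : ∑ i ∈ range l.sum, (b i : ℤ) = k := by exact_mod_cast hsum
    rcases lt_or_ge i l.sum with hil | hli
    · have := hrows i (mem_range.2 hil)
      rw [hrow, if_neg (by omega)]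
      linarith
    rcases eq_or_ne i (l.sum + a - 1) with rfl | hic
    · rw [hlast, hk, hbsum]
    have hγl : ∑ i ∈ range l.sum, γ i = k := by
      have := sum_congr rfl hrows
      rw [sum_netRowSum, sum_sub_distrib, hbsum] at this
      linarith
    rw [hrow, if_neg hic, netRowSum_eq_zero_of_le hm₀' hli, hb i hli,
      eq_zero_of_sum_range_eq_neg (by omega) hγ (by rwa [Nat.sub_add_cancel (by omega)])
        (by rw [hγl, hk, neg_neg]) hli (by omega)]
    simp

end Glue

def extendByZero {r : ℕ} (β : Fin r → ℕ) (i : ℕ) : ℕ := if hi : i < r then β ⟨i, hi⟩ else 0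

lemma extendByZero_of_le {r : ℕ} (β : Fin r → ℕ) {i : ℕ} (hi : r ≤ i) : extendByZero β i = 0 :=
  dif_neg (by omega)

lemma cast_extendByZero {r : ℕ} (β : Fin r → ℕ) (i : ℕ) :
    (extendByZero β i : ℤ) = if hi : i < r then (β ⟨i, hi⟩ : ℤ) else 0 := by
  unfold extendByZero
  split_ifs <;> simp

lemma extendByZero_restrict {r : ℕ} {f : ℕ → ℕ} (hf : ∀ i, r ≤ i → f i = 0) :
    extendByZero (fun i : Fin r => f i) = f := by
  funext i
  unfold extendByZero
  split_ifs with hi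
  · rfl
  · exact (hf i (by omega)).symm

lemma sum_range_extendByZero {r : ℕ} (β : Fin r → ℕ) :
    ∑ i ∈ range r, extendByZero β i = ∑ i, β i := by
  rw [← Fin.sum_univ_eq_sum_range]
  exact sum_congr rfl fun i _ => dif_pos i.2

section LastColumn

variable {l : List ℕ} {a : ℕ} {m : ℕ × ℕ → ℕ}

lemma lt_of_mem_Phi_append_singleton {i j : ℕ} (h : (i, j) ∈ Phi (l ++ [a])) :
    i < l.sum ∧ j < l.sum + a := by
  rcases mem_Phi_append_singleton.1 h with h | h
  · have := (mem_Phi.1 h).1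
    exact ⟨this.1, by omega⟩
  · omega

lemma restrictCols_eq_zero_of_notMem_Phi (hm : ∀ p, p ∉ Phi (l ++ [a]) → m p = 0) :
    ∀ p, p ∉ Phi l → restrictCols l.sum m p = 0 := by
  rintro ⟨i, j⟩ hp
  unfold restrictCols
  split_ifs with hj
  · exact hm _ fun h => by rcases mem_Phi_append_singleton.1 h with h | h <;> [exact hp h; omega]
  · rfl

lemma restrictCols_add_column {c : ℕ} {b : ℕ → ℕ} (hm : ∀ p, p ∉ Phi l → m p = 0)
    (hc : l.sum ≤ c) : restrictCols l.sum (m + column c b) = m := by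
  funext ⟨i, j⟩
  simp only [restrictCols, Pi.add_apply, column]
  by_cases hj : j < l.sum
  · rw [if_pos hj, if_neg (by omega), add_zero]
  · rw [if_neg hj]
    exact (hm _ fun h => hj (mem_Phi.1 h).1.2).symm

lemma add_column_apply {c : ℕ} {b : ℕ → ℕ} (hm : ∀ p, p ∉ Phi l → m p = 0)
    (hc : l.sum ≤ c) (i : ℕ) : (m + column c b) (i, c) = b i := by
  rw [Pi.add_apply, hm (i, c) fun h => not_lt.2 hc (mem_Phi.1 h).1.2, zero_add]
  exact if_pos rfl

lemma IsKostantArray.extendByZero_lastColumn {γ : ℕ → ℤ} {d c : ℕ}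
    (hm : IsKostantArray (l ++ [a]) γ d m) :
    extendByZero (fun i : Fin l.sum => m (i, c)) = fun i => m (i, c) :=
  extendByZero_restrict fun _ hi => hm.1 _ fun h =>
    hi.not_gt (lt_of_mem_Phi_append_singleton h).1

lemma IsKostantArray.eq_restrictCols_add_column {γ : ℕ → ℤ} {d : ℕ} (ha : 0 < a)
    (hγ : ∀ i < l.sum + a - 1, 0 ≤ γ i) (hm : IsKostantArray (l ++ [a]) γ d m) :
    m = restrictCols l.sum m + column (l.sum + a - 1) (fun i => m (i, l.sum + a - 1)) := by
  obtain ⟨hsupp, hrows, -⟩ := hm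
  simp only [List.sum_append, List.sum_cons, List.sum_nil, add_zero] at hrows
  have hout {i j : ℕ} (h : ¬ (i < l.sum ∧ j < l.sum + a)) : m (i, j) = 0 :=
    hsupp _ fun hp => h (lt_of_mem_Phi_append_singleton hp)
  funext ⟨i, j⟩
  simp only [Pi.add_apply, restrictCols, column]
  by_cases hjr : j < l.sum
  · rw [if_pos hjr, if_neg (by omega), add_zero]
  rw [if_neg hjr, zero_add]
  by_cases hjc : j = l.sum + a - 1
  · rw [if_pos hjc, hjc]
  rw [if_neg hjc]
  by_cases hjn : j < l.sum + a
  · by_cases hin : i < l.sum + a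
    · exact eq_zero_of_netRowSum_nonneg (fun k => hout (by omega))
        (hrows j (mem_range.2 hjn) ▸ hγ j (by omega)) hin
    · exact hout (by omega)
  · exact hout (by omega)

end LastColumn

section Recurrence

variable {l : List ℕ} {a : ℕ} {γ : ℕ → ℤ} {d k : ℕ}

lemma IsKostantArray.restrictCols_lastColumn (ha : 0 < a)
    (hγ : ∀ i < l.sum + a - 1, 0 ≤ γ i) (h0 : ∑ i ∈ range (l.sum + a), γ i = 0)
    (hk : γ (l.sum + a - 1) = -k) {m : ℕ × ℕ → ℕ} (hm : IsKostantArray (l ++ [a]) γ d m) :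
    IsKostantArray l (fun i => γ i - m (i, l.sum + a - 1)) (d - k) (restrictCols l.sum m) ∧
      ∑ i ∈ range l.sum, m (i, l.sum + a - 1) = k ∧ k ≤ d := by
  have hsupp := hm.1
  rw [hm.eq_restrictCols_add_column ha hγ] at hm
  refine (isKostantArray_add_column_iff ha (restrictCols_eq_zero_of_notMem_Phi hsupp)
    (fun i hi => hsupp _ fun h => ?_) hγ h0 hk).1 hm
  have := (lt_of_mem_Phi_append_singleton h).1
  omega

def lastColumnEquiv (ha : 0 < a) (hγ : ∀ i < l.sum + a - 1, 0 ≤ γ i)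
    (h0 : ∑ i ∈ range (l.sum + a), γ i = 0) (hk : γ (l.sum + a - 1) = -k) (hkd : k ≤ d) :
    {m // IsKostantArray (l ++ [a]) γ d m} ≃
      {p : Nat.antidiagonalTuple l.sum k × (ℕ × ℕ → ℕ) //
        IsKostantArray l (fun i => γ i - extendByZero p.1.1 i) (d - k) p.2} where
  toFun m :=
    have hm := m.2.restrictCols_lastColumn ha hγ h0 hk
    have hcol := m.2.extendByZero_lastColumn
    ⟨(⟨fun i => m.1 (i, l.sum + a - 1), by
        rw [Nat.mem_antidiagonalTuple, ← sum_range_extendByZero, hcol]; exact hm.2.1⟩,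
      restrictCols l.sum m.1), by dsimp only; rw [hcol]; exact hm.1⟩
  invFun p :=
    ⟨p.1.2 + column (l.sum + a - 1) (extendByZero p.1.1.1),
      (isKostantArray_add_column_iff ha p.2.1 (fun _ => extendByZero_of_le _) hγ h0 hk).2
        ⟨p.2, by rw [sum_range_extendByZero]; exact Nat.mem_antidiagonalTuple.1 p.1.1.2, hkd⟩⟩
  left_inv m := Subtype.ext <| by
    dsimp only
    rw [m.2.extendByZero_lastColumn]
    exact (m.2.eq_restrictCols_add_column ha hγ).symm
  right_inv p := by
    have hc : l.sum ≤ l.sum + a - 1 := by omega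
    refine Subtype.ext (Prod.ext (Subtype.ext (funext fun i => ?_)) ?_)
    · simp only [add_column_apply p.2.1 hc, extendByZero, dif_pos i.2]
    · exact restrictCols_add_column p.2.1 hc

theorem KCoeff_append_singleton (ha : 0 < a) (hγ : ∀ i < l.sum + a - 1, 0 ≤ γ i)
    (h0 : ∑ i ∈ range (l.sum + a), γ i = 0) (hk : γ (l.sum + a - 1) = -k) (hkd : k ≤ d) :
    KCoeff (l ++ [a]) γ d = ∑ β ∈ Nat.antidiagonalTuple l.sum k,
      KCoeff l (fun i => γ i - if hi : i < l.sum then (β ⟨i, hi⟩ : ℤ) else 0) (d - k) := by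
  simp_rw [← cast_extendByZero]
  rw [KCoeff_eq_card, Nat.card_congr ((lastColumnEquiv ha hγ h0 hk hkd).trans
    (Equiv.subtypeProdEquivSigmaSubtype fun (β : Nat.antidiagonalTuple l.sum k) m =>
      IsKostantArray l (fun i => γ i - extendByZero β.1 i) (d - k) m)), Nat.card_sigma]
  exact sum_coe_sort _ fun β => KCoeff l (fun i => γ i - extendByZero β i) (d - k)

theorem KCoeff_append_singleton_of_lt (ha : 0 < a) (hγ : ∀ i < l.sum + a - 1, 0 ≤ γ i)
    (h0 : ∑ i ∈ range (l.sum + a), γ i = 0) (hk : γ (l.sum + a - 1) = -k) (hdk : d < k) :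
    KCoeff (l ++ [a]) γ d = 0 := by
  rw [KCoeff_eq_card, Nat.card_eq_zero]
  exact Or.inl ⟨fun m => hdk.not_ge (m.2.restrictCols_lastColumn ha hγ h0 hk).2.2⟩

end Recurrence

/-- Recurrence stripping the last part of the composition: for `γ` in the
dominant chamber (`γ_1 ≥ ⋯ ≥ γ_{n−1} ≥ 0`, so `γ_{r+1} = ⋯ = γ_{n−1} = 0` and `γ_n ≤ 0`),
`K_{Φ(η)}(γ|q) = q^{−γ_n} Σ_{β ∈ ℤ_{≥0}^r, |β| = −γ_n} K_{Φ(η̃)}(γ − β | q)`;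
stated coefficient-wise in `q`. -/
theorem stmt10 (η : List ℕ) (hp : 2 ≤ η.length) (hpos : ∀ x ∈ η, 0 < x)
    (γ : ℕ → ℤ) (h0 : ∑ i ∈ Finset.range η.sum, γ i = 0)
    (hdom : ∀ i j, i ≤ j → j ≤ η.sum - 2 → γ j ≤ γ i)
    (hnn : 0 ≤ γ (η.sum - 2)) (d : ℕ) :
    KCoeff η γ d =
      if (-(γ (η.sum - 1))).toNat ≤ d then
        ∑ β ∈ Finset.Nat.antidiagonalTuple η.dropLast.sum (-(γ (η.sum - 1))).toNat,
          KCoeff η.dropLast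
            (fun i => γ i - (if hi : i < η.dropLast.sum then (β ⟨i, hi⟩ : ℤ) else 0))
            (d - (-(γ (η.sum - 1))).toNat)
      else 0 := by
  obtain ⟨l, a, rfl⟩ := (List.eq_nil_or_concat' η).resolve_left (by rintro rfl; simp at hp)
  have ha : 0 < a := hpos a (by simp)
  rw [List.dropLast_concat]
  simp only [List.sum_append, List.sum_cons, List.sum_nil, add_zero] at h0 hdom hnn ⊢
  have hγ : ∀ i < l.sum + a - 1, 0 ≤ γ i := fun i hi => hnn.trans (hdom i _ (by omega) le_rfl)
  have hlast : γ (l.sum + a - 1) ≤ 0 := by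
    rw [show l.sum + a = l.sum + a - 1 + 1 by omega, sum_range_succ] at h0
    linarith [sum_nonneg fun i hi => hγ i (mem_range.1 hi)]
  have hk : γ (l.sum + a - 1) = -((-γ (l.sum + a - 1)).toNat : ℤ) := by
    rw [Int.toNat_of_nonneg (by omega), neg_neg]
  split_ifs with hkd
  · exact KCoeff_append_singleton ha hγ h0 hk hkd
  · exact KCoeff_append_singleton_of_lt ha hγ h0 hk (not_le.1 hkd)
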